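/- Let G be a minimal counterexample to Ohba's Conjecture with maximal bad list assignment L, and suppose fewer than k colours are frequent. Then G contains at least γ singletons, where γ = |V(G)| − |C|. -/

import Mathlib

/-- `f` is an acceptable colouring for the list assignment `L` on `G`:
it is proper and each vertex gets a colour from its list. -/
def IsListColoring {V : Type} (G : SimpleGraph V) (L : V → Finset ℕ) (f : V → ℕ) : Prop :=
  (∀ v, f v ∈ L v) ∧ ∀ ⦃u w : V⦄, G.Adj u w → f u ≠ f w

/-- `G` is `L`-colourable. -/
def ListColorable {V : Type} (G : SimpleGraph V) (L : V → Finset ℕ) : Prop :=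
  ∃ f, IsListColoring G L f

/-- `G` is `k`-choosable: `L`-colourable whenever every list has size at least `k`. -/
def Choosable {V : Type} (G : SimpleGraph V) (k : ℕ) : Prop :=
  ∀ L : V → Finset ℕ, (∀ v, k ≤ (L v).card) → ListColorable G L

/-- The list chromatic number of `G`. -/
noncomputable def listChromaticNumber {V : Type} (G : SimpleGraph V) : ℕ :=
  sInf {k | Choosable G k}

open Finset
open scoped Classical

/-- The set `C` of all colours appearing in some list. -/
noncomputable def colorSet {V : Type} [Fintype V] (L : V → Finset ℕ) : Finset ℕ :=
  Finset.univ.biUnion L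

/-- `N_B(c)`: the set of vertices whose list contains the colour `c`. -/
noncomputable def NB {V : Type} [Fintype V] (L : V → Finset ℕ) (c : ℕ) : Finset V :=
  Finset.univ.filter (fun v => c ∈ L v)

/-- `γ = |V(G)| - |C|`. -/
noncomputable def gam (V : Type) [Fintype V] (L : V → Finset ℕ) : ℕ :=
  Fintype.card V - (colorSet L).card

/-- The part (maximal stable set) of the complete multipartite graph with index `i`. -/
noncomputable def part {V : Type} [Fintype V] {k : ℕ} (p : V → Fin k) (i : Fin k) : Finset V :=
  Finset.univ.filter (fun v => p v = i)

/-- `v` is a singleton: the part containing `v` has exactly one element. -/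
def IsSingleton {V : Type} [Fintype V] {k : ℕ} (p : V → Fin k) (v : V) : Prop :=
  (part p (p v)).card = 1

/-- `b`: the number of non-singleton parts. -/
noncomputable def numBigParts {V : Type} [Fintype V] {k : ℕ} (p : V → Fin k) : ℕ :=
  (Finset.univ.filter (fun i : Fin k => 2 ≤ (part p i).card)).card

/-- A colour is globally frequent if it appears in the lists of at least `k+1` vertices. -/
def GloballyFrequent {V : Type} [Fintype V] (L : V → Finset ℕ) (k : ℕ) (c : ℕ) : Prop :=
  k + 1 ≤ (NB L c).card

/-- A colour is frequent among singletons if it appears in the lists of at least `γ`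
singletons. -/
def FrequentAmongSingletons {V : Type} [Fintype V] {k : ℕ} (p : V → Fin k)
    (L : V → Finset ℕ) (c : ℕ) : Prop :=
  gam V L ≤ (Finset.univ.filter (fun v => IsSingleton p v ∧ c ∈ L v)).card

/-- A colour is frequent if it is globally frequent or frequent among singletons. -/
def Frequent {V : Type} [Fintype V] {k : ℕ} (p : V → Fin k) (L : V → Finset ℕ) (c : ℕ) : Prop :=
  GloballyFrequent L k c ∨ FrequentAmongSingletons p L c

/-- A proper colouring `f : V → C` is near-acceptable for `L` if every vertex `v` satisfies
`f v ∈ L v`, or `f v` is frequent and `v` is the unique vertex coloured `f v`. -/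
def NearAcceptable {V : Type} [Fintype V] {k : ℕ} (G : SimpleGraph V) (p : V → Fin k)
    (L : V → Finset ℕ) (f : V → ℕ) : Prop :=
  (∀ v, f v ∈ colorSet L) ∧ (∀ ⦃u w : V⦄, G.Adj u w → f u ≠ f w) ∧
    ∀ v, f v ∈ L v ∨ (Frequent p L (f v) ∧ ∀ u, f u = f v → u = v)

/-- `L` is a maximal bad list assignment: adding any colour of `C` to any list makes `G`
colourable. -/
def MaximalBad {V : Type} [Fintype V] (G : SimpleGraph V) (L : V → Finset ℕ) : Prop :=
  ∀ v c, c ∈ colorSet L → c ∉ L v →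
    ListColorable G (Function.update L v (insert c (L v)))

/-- A minimal counterexample to Ohba's conjecture: `G` is a complete `k`-partite graph
(with part-indexing map `p`) on at most `2k+1` vertices, `L` is a list assignment with all
lists of size at least `k` for which `G` is not `L`-colourable (so `χ_ℓ(G) > k = χ(G)`),
and every graph on fewer vertices satisfies Ohba's conjecture. -/
structure MinCex (V : Type) [Fintype V] (G : SimpleGraph V) (k : ℕ)
    (p : V → Fin k) (L : V → Finset ℕ) : Prop where
  adj_iff : ∀ u v, G.Adj u v ↔ p u ≠ p v
  surj : Function.Surjective p
  card_le : Fintype.card V ≤ 2 * k + 1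
  lists : ∀ v, k ≤ (L v).card
  bad : ¬ ListColorable G L
  minimal : ∀ (W : Type) [Fintype W] (H : SimpleGraph W) (j : ℕ),
    Fintype.card W < Fintype.card V → H.chromaticNumber = (j : ℕ∞) →
    Fintype.card W ≤ 2 * j + 1 → listChromaticNumber H = j

/-!
In a minimal counterexample, every non-singleton part contains, for each colour `c`, a vertex
whose list misses `c`: otherwise colour that part with `c` and list-colour the rest by
minimality. So each colour lies in at most `|V| - b ≤ k + (k + 1 - b)` lists, and in at most
`k` unless it is frequent. Double counting the pairs `(v, c)` with `c ∈ L v`, of which there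
are at least `k |V|`, gives `k γ ≤ |F| (k + 1 - b)`. With `|F| < k` this forces
`γ ≤ k - b`, and there are at least `k - b` singleton parts.
-/

theorem choosable_card {W : Type} [Fintype W] (H : SimpleGraph W) :
    Choosable H (Fintype.card W) := by
  intro L hL
  have hall : ∀ s : Finset W, s.card ≤ (s.biUnion L).card := by
    intro s
    rcases s.eq_empty_or_nonempty with rfl | ⟨x, hx⟩
    · simp
    · calc s.card ≤ Fintype.card W := card_le_univ s
        _ ≤ (L x).card := hL x
        _ ≤ (s.biUnion L).card := card_le_card (subset_biUnion_of_mem L hx)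
  obtain ⟨f, hinj, hmem⟩ := (all_card_le_biUnion_card_iff_exists_injective L).1 hall
  exact ⟨f, hmem, fun _ _ huw he => huw.ne (hinj he)⟩

theorem choosable_listChromaticNumber {W : Type} [Fintype W] (H : SimpleGraph W) :
    Choosable H (listChromaticNumber H) :=
  Nat.sInf_mem (s := {m | Choosable H m}) ⟨_, choosable_card H⟩

theorem chromaticNumber_eq_card_of_adj_iff {W ι : Type*} [Fintype ι] {H : SimpleGraph W}
    {q : W → ι} (hadj : ∀ u w, H.Adj u w ↔ q u ≠ q w) (hq : Function.Surjective q) :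
    H.chromaticNumber = Fintype.card ι := by
  refine le_antisymm (SimpleGraph.Coloring.colorable ⟨q, (hadj _ _).1⟩).chromaticNumber_le ?_
  obtain ⟨r, hr⟩ := hq.hasRightInverse
  refine SimpleGraph.le_chromaticNumber_of_pairwise_adj (Nat.card_eq_fintype_card).ge r ?_
  intro a b hab
  rwa [hadj, hr a, hr b]

theorem listColorable_of_comap_erase {V : Type} {G : SimpleGraph V} {L : V → Finset ℕ}
    {S : V → Prop} (hS : ∀ u w, S u → S w → ¬ G.Adj u w) (c : ℕ)
    (hc : ∀ v, S v → c ∈ L v)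
    (hrest : ListColorable (G.comap (Subtype.val : {v // ¬ S v} → V)) (fun w => (L w).erase c)) :
    ListColorable G L := by
  obtain ⟨f, hfmem, hfadj⟩ := hrest
  refine ⟨fun v => if hv : S v then c else f ⟨v, hv⟩, fun v => ?_, fun u w huw => ?_⟩
  · by_cases hv : S v
    · simpa [hv] using hc v hv
    · simpa [hv] using mem_of_mem_erase (hfmem ⟨v, hv⟩)
  · by_cases hu : S u <;> by_cases hw : S w <;>
      simp only [hu, hw, dif_pos, dif_neg, not_false_eq_true]
    · exact absurd huw (hS u w hu hw)
    · exact (ne_of_mem_erase (hfmem ⟨w, hw⟩)).symm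
    · exact ne_of_mem_erase (hfmem ⟨u, hu⟩)
    · exact hfadj (u := ⟨u, hu⟩) (w := ⟨w, hw⟩) huw

section Partition

variable {V : Type} [Fintype V] {k : ℕ} (p : V → Fin k)

theorem le_card_singletons_add_numBigParts (hp : Function.Surjective p) :
    k ≤ (univ.filter (fun v => IsSingleton p v)).card + numBigParts p := by
  set S := univ.filter (fun v => IsSingleton p v)
  have hsmall : univ.filter (fun i : Fin k => (part p i).card = 1) ⊆ S.image p := by
    intro i hi
    obtain ⟨v, rfl⟩ := hp i
    exact mem_image_of_mem p (mem_filter.2 ⟨mem_univ v, (mem_filter.1 hi).2⟩)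
  have hbig : univ.filter (fun i : Fin k => ¬ (part p i).card = 1) ⊆
      univ.filter (fun i : Fin k => 2 ≤ (part p i).card) := by
    intro i hi
    obtain ⟨v, rfl⟩ := hp i
    have hpos : 0 < (part p (p v)).card := card_pos.2 ⟨v, by simp [part]⟩
    simp only [mem_filter, mem_univ, true_and] at hi ⊢
    omega
  calc k = (univ.filter (fun i : Fin k => (part p i).card = 1)).card
        + (univ.filter (fun i : Fin k => ¬ (part p i).card = 1)).card := by
        rw [card_filter_add_card_filter_not, card_univ, Fintype.card_fin]
    _ ≤ S.card + numBigParts p :=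
        add_le_add ((card_le_card hsmall).trans card_image_le) (card_le_card hbig)

theorem numBigParts_le : numBigParts p ≤ k :=
  (card_filter_le _ _).trans (by rw [card_univ, Fintype.card_fin])

end Partition

theorem sum_card_NB_colorSet {V : Type} [Fintype V] (L : V → Finset ℕ) :
    ∑ c ∈ colorSet L, (NB L c).card = ∑ v, (L v).card := by
  refine (sum_card_bipartiteAbove_eq_sum_card_bipartiteBelow (fun c v => c ∈ L v)
    (s := colorSet L) (t := univ)).trans ?_
  refine sum_congr rfl fun v _ => congrArg card ?_
  ext c
  simp only [bipartiteBelow, mem_filter, and_iff_right_iff_imp, colorSet, mem_biUnion]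
  exact fun hc => ⟨v, mem_univ v, hc⟩

namespace MinCex

variable {V : Type} [Fintype V] {G : SimpleGraph V} {k : ℕ} {p : V → Fin k}
  {L : V → Finset ℕ}

/-- Otherwise colour the part with `c`: what is left is a complete `(k-1)`-partite graph on at
most `2(k-1)+1` vertices, hence `(k-1)`-choosable by minimality. -/
theorem exists_mem_part_not_mem (h : MinCex V G k p L) (c : ℕ) {i : Fin k}
    (hi : 2 ≤ (part p i).card) : ∃ v ∈ part p i, c ∉ L v := by
  by_contra! hcon
  apply h.bad
  refine listColorable_of_comap_erase (S := fun v => p v = i)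
    (fun u w hu hw hadj => (h.adj_iff u w).1 hadj (hu.trans hw.symm)) c
    (fun v hv => hcon v (by simp [part, hv])) ?_
  set H := G.comap (Subtype.val : {v // ¬ p v = i} → V)
  have hcardW : Fintype.card {v // ¬ p v = i} = Fintype.card V - (part p i).card := by
    rw [Fintype.card_subtype_compl, Fintype.card_subtype]; rfl
  have hcardι : Fintype.card {j : Fin k // ¬ j = i} = k - 1 := by
    rw [Fintype.card_subtype_compl, Fintype.card_subtype_eq, Fintype.card_fin]
  have hχ : H.chromaticNumber = (k - 1 : ℕ) := by
    rw [← hcardι]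
    refine chromaticNumber_eq_card_of_adj_iff (q := fun w => ⟨p w, w.2⟩)
      (fun u w => (h.adj_iff u w).trans Subtype.mk_eq_mk.symm.not) fun j => ?_
    obtain ⟨v, hv⟩ := h.surj j
    exact ⟨⟨v, hv ▸ j.2⟩, Subtype.ext hv⟩
  have hpart_le : (part p i).card ≤ Fintype.card V := card_le_univ _
  have hk := h.card_le
  have hlist := h.minimal _ H (k - 1) (by omega) hχ (by omega)
  have hch := choosable_listChromaticNumber H
  rw [hlist] at hch
  refine hch _ fun w => ?_
  have := h.lists w.1
  have := pred_card_le_card_erase (s := L w.1) (a := c)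
  omega

theorem card_NB_add_numBigParts_le (h : MinCex V G k p L) (c : ℕ) :
    (NB L c).card + numBigParts p ≤ Fintype.card V := by
  have hbig : univ.filter (fun i : Fin k => 2 ≤ (part p i).card) ⊆
      (univ.filter (fun v => c ∉ L v)).image p := by
    intro i hi
    obtain ⟨v, hv, hc⟩ := h.exists_mem_part_not_mem c (mem_filter.1 hi).2
    exact mem_image.2 ⟨v, by simpa using hc, (mem_filter.1 hv).2⟩
  have := card_filter_add_card_filter_not (s := (univ : Finset V)) (fun v => c ∈ L v)
  rw [card_univ] at this
  have := (card_le_card hbig).trans card_image_le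
  unfold NB numBigParts
  omega

theorem card_NB_le (h : MinCex V G k p L) (c : ℕ) :
    (NB L c).card ≤ k + if Frequent p L c then k + 1 - numBigParts p else 0 := by
  split_ifs with hc
  · have := h.card_NB_add_numBigParts_le c
    have := numBigParts_le p
    have := h.card_le
    omega
  · have : ¬ GloballyFrequent L k c := fun hg => hc (Or.inl hg)
    unfold GloballyFrequent at this
    omega

theorem mul_gam_le (h : MinCex V G k p L) :
    k * gam V L ≤
      ((colorSet L).filter (fun c => Frequent p L c)).card * (k + 1 - numBigParts p) := by
  have hsum : k * Fintype.card V ≤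
      k * (colorSet L).card + ((colorSet L).filter (fun c => Frequent p L c)).card
        * (k + 1 - numBigParts p) :=
    calc k * Fintype.card V = ∑ _v : V, k := by simp [mul_comm]
      _ ≤ ∑ v, (L v).card := sum_le_sum fun v _ => h.lists v
      _ = ∑ c ∈ colorSet L, (NB L c).card := (sum_card_NB_colorSet L).symm
      _ ≤ ∑ c ∈ colorSet L, (k + if Frequent p L c then k + 1 - numBigParts p else 0) :=
        sum_le_sum fun c _ => h.card_NB_le c
      _ = _ := by rw [sum_add_distrib, ← sum_filter, sum_const, sum_const, smul_eq_mul,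
          smul_eq_mul, mul_comm]
  rw [gam, Nat.mul_sub]
  omega

end MinCex

theorem stmt_12_general (V : Type) [Fintype V] (G : SimpleGraph V) (k : ℕ) (p : V → Fin k)
    (L : V → Finset ℕ) (h : MinCex V G k p L)
    (hfew : ((colorSet L).filter (fun c => Frequent p L c)).card < k) :
    gam V L ≤ (Finset.univ.filter (fun v => IsSingleton p v)).card := by
  by_contra! hlt
  have hsingletons := le_card_singletons_add_numBigParts p h.surj
  have hb := numBigParts_le p
  have hpos : 0 < k + 1 - numBigParts p := by omega
  have hγ : k * (k + 1 - numBigParts p) ≤ k * gam V L := Nat.mul_le_mul_left k (by omega)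
  have hF := Nat.mul_lt_mul_of_pos_right hfew hpos
  have hcount := h.mul_gam_le
  omega

/-- If fewer than `k` colours are frequent, then `G` contains at least `γ` singletons. -/
theorem stmt_12 (V : Type) [Fintype V] (G : SimpleGraph V) (k : ℕ) (p : V → Fin k)
    (L : V → Finset ℕ) (h : MinCex V G k p L) (hmax : MaximalBad G L)
    (hfew : ((colorSet L).filter (fun c => Frequent p L c)).card < k) :
    gam V L ≤ (Finset.univ.filter (fun v => IsSingleton p v)).card :=
  stmt_12_general V G k p L h hfew
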